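/- arXiv:1804.10405 — 5 statements merged into one kernel-verified Lean document; each statement's English description precedes it below -/
import Mathlib

section
/- Let (b_n) be a sequence of positive real numbers bounded away from 0 such that ∑_n b_n⁻¹ = ∞. Then there exist non-negative real numbers (a_{n,k})_{n,k ∈ ℕ} such that: (i) for every n the sequence (a_{n,k})_k has finite support, and min{k : a_{n,k} ≠ 0} → ∞ as n → ∞; (ii) ∑_k a_{n,k} = 1 for every n, and ∑_{n,k} a_{n,k}² < ∞; (iii) ∑_k a_{n,k}² b_k → 0 as n → ∞. -/
/-!
Cut `ℕ` into consecutive blocks `[m n, m (n+1))` on each of which `∑ b_k⁻¹ =: S n ≥ 2ⁿ`, which is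
possible because `∑ b_k⁻¹` diverges, and spread row `n` over block `n` proportionally to `b_k⁻¹`:
`a_{n,k} = b_k⁻¹ / S n`. Then each row sums to `1`, `∑_k a_{n,k}² b_k = 1 / S n ≤ 2⁻ⁿ`, and
`a_{n,k}² ≤ δ⁻¹ a_{n,k}² b_k` makes the squares summable.
-/

open Filter Finset Function

theorem exists_lt_le_sum_Ico_of_not_summable {f : ℕ → ℝ} (hf : ∀ k, 0 ≤ f k)
    (hsum : ¬ Summable f) (N : ℕ) (c : ℝ) : ∃ M, N < M ∧ c ≤ ∑ k ∈ Ico N M, f k := by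
  rw [not_summable_iff_tendsto_nat_atTop_of_nonneg hf] at hsum
  obtain ⟨M, hM, hNM⟩ := ((hsum.eventually_ge_atTop (c + ∑ k ∈ range N, f k)).and
    (eventually_gt_atTop N)).exists
  refine ⟨M, hNM, ?_⟩
  rw [sum_Ico_eq_sub _ hNM.le]
  linarith

theorem exists_strictMono_le_sum_Ico_of_not_summable {f : ℕ → ℝ} (hf : ∀ k, 0 ≤ f k)
    (hsum : ¬ Summable f) (c : ℕ → ℝ) :
    ∃ m : ℕ → ℕ, StrictMono m ∧ ∀ n, c n ≤ ∑ k ∈ Ico (m n) (m (n + 1)), f k := by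
  choose M hNM hM using exists_lt_le_sum_Ico_of_not_summable hf hsum
  let m : ℕ → ℕ := fun n => Nat.rec 0 (fun k mk => M mk (c k)) n
  exact ⟨m, strictMono_nat_of_lt_succ fun n => hNM (m n) (c n), fun n => hM (m n) (c n)⟩

theorem Summable.of_mul_of_forall_le {ι : Type*} {f g : ι → ℝ} {δ : ℝ} (hδ : 0 < δ)
    (hf : ∀ i, 0 ≤ f i) (hg : ∀ i, δ ≤ g i) (hfg : Summable fun i => f i * g i) : Summable f :=
  (hfg.mul_left δ⁻¹).of_nonneg_of_le hf fun i => by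
    rw [le_inv_mul_iff₀ hδ, mul_comm δ]
    exact mul_le_mul_of_nonneg_left (hg i) (hf i)

section InverseWeights

variable {ι : Type*} (b : ι → ℝ) (s : Finset ι)

noncomputable def inverseWeights : ι → ℝ :=
  (s : Set ι).indicator fun k => (b k)⁻¹ / ∑ j ∈ s, (b j)⁻¹

theorem support_inverseWeights_subset : support (inverseWeights b s) ⊆ s :=
  Set.support_indicator_subset

theorem inverseWeights_eq_zero {k : ι} (hk : k ∉ s) : inverseWeights b s k = 0 :=
  Set.indicator_of_notMem hk _

variable {b} in
theorem inverseWeights_nonneg (hb : ∀ k, 0 ≤ b k) (k : ι) : 0 ≤ inverseWeights b s k :=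
  Set.indicator_nonneg (fun k _ => div_nonneg (inv_nonneg.2 (hb k))
    (sum_nonneg fun j _ => inv_nonneg.2 (hb j))) k

variable {s} in
theorem tsum_inverseWeights (hs : ∑ j ∈ s, (b j)⁻¹ ≠ 0) : ∑' k, inverseWeights b s k = 1 := by
  rw [inverseWeights, ← sum_eq_tsum_indicator, ← sum_div, div_self hs]

theorem tsum_inverseWeights_sq_mul :
    ∑' k, inverseWeights b s k ^ 2 * b k = (∑ j ∈ s, (b j)⁻¹)⁻¹ := by
  have hsq (k : ι) : inverseWeights b s k ^ 2 * b k =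
      (s : Set ι).indicator (fun k => (b k)⁻¹ / (∑ j ∈ s, (b j)⁻¹) ^ 2) k := by
    by_cases hk : k ∈ s
    · have hbk : (b k)⁻¹ * (b k)⁻¹ * b k = (b k)⁻¹ := by simpa using mul_self_mul_inv (b k)⁻¹
      simp only [inverseWeights, Set.indicator_of_mem (mem_coe.2 hk)]
      rw [div_pow, div_mul_eq_mul_div, sq (b k)⁻¹, hbk]
    · simp [inverseWeights, hk]
  rw [tsum_congr hsq, ← sum_eq_tsum_indicator, ← sum_div, sq, div_self_mul_self']

end InverseWeights

/-- **Lemma.** Let `(b_n)` be a sequence of positive numbers bounded away from `0` with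
`∑_n b_n⁻¹ = ∞`. Then there are non-negative numbers `(a_{n,k})` such that
(i) each `(a_{n,k})_k` has finite support and `min {k : a_{n,k} ≠ 0} → ∞`;
(ii) `∑_k a_{n,k} = 1` for every `n` and `∑_{n,k} a_{n,k}² < ∞`;
(iii) `∑_k a_{n,k}² b_k → 0`. -/
theorem exists_coefficient_array
    (b : ℕ → ℝ) (δ : ℝ) (hδ : 0 < δ) (hb : ∀ n, δ ≤ b n)
    (hdiv : ¬ Summable fun n => (b n)⁻¹) :
    ∃ a : ℕ → ℕ → ℝ,
      (∀ n k, 0 ≤ a n k) ∧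
      (∀ n, (Function.support (a n)).Finite) ∧
      (∀ M : ℕ, ∀ᶠ n in Filter.atTop, ∀ k < M, a n k = 0) ∧
      (∀ n, ∑' k, a n k = 1) ∧
      (Summable fun p : ℕ × ℕ => a p.1 p.2 ^ 2) ∧
      Filter.Tendsto (fun n => ∑' k, a n k ^ 2 * b k) Filter.atTop (nhds 0) := by
  have hb_nonneg (k : ℕ) : 0 ≤ b k := hδ.le.trans (hb k)
  obtain ⟨m, hm, hS⟩ := exists_strictMono_le_sum_Ico_of_not_summable
    (fun k => inv_nonneg.2 (hb_nonneg k)) hdiv fun n => (2 : ℝ) ^ n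
  set S : ℕ → ℝ := fun n => ∑ k ∈ Ico (m n) (m (n + 1)), (b k)⁻¹
  have hS_pos (n : ℕ) : 0 < S n := (pow_pos two_pos n).trans_le (hS n)
  have hS_inv (n : ℕ) : (S n)⁻¹ ≤ 2⁻¹ ^ n := by
    rw [inv_pow]; exact inv_anti₀ (by positivity) (hS n)
  let a n := inverseWeights b (Ico (m n) (m (n + 1)))
  have hrow (n : ℕ) : ∑' k, a n k ^ 2 * b k = (S n)⁻¹ := tsum_inverseWeights_sq_mul _ _
  refine ⟨a, fun n => inverseWeights_nonneg _ hb_nonneg,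
    fun n => (finite_toSet _).subset (support_inverseWeights_subset _ _), fun M => ?_,
    fun n => tsum_inverseWeights b (hS_pos n).ne', ?_, ?_⟩
  · filter_upwards [eventually_ge_atTop M] with n hn k hk
    exact inverseWeights_eq_zero _ _ fun hks => (hk.trans_le (hn.trans (hm.id_le n))).not_ge
      (mem_Ico.1 hks).1
  · refine Summable.of_mul_of_forall_le hδ (fun _ => sq_nonneg _) (fun p => hb p.2) ?_
    refine (summable_prod_of_nonneg fun p => mul_nonneg (sq_nonneg _) (hb_nonneg p.2)).2
      ⟨fun n => summable_of_ne_finset_zero (s := Ico (m n) (m (n + 1))) fun k hk => ?_, ?_⟩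
    · simp [a, inverseWeights_eq_zero _ _ hk]
    · simp only [hrow]
      exact (summable_geometric_of_lt_one (by norm_num) (by norm_num)).of_nonneg_of_le
        (fun n => (inv_pos.2 (hS_pos n)).le) hS_inv
  · simp only [hrow]
    exact squeeze_zero (fun n => (inv_pos.2 (hS_pos n)).le) hS_inv
      (tendsto_pow_atTop_nhds_zero_of_lt_one (by norm_num) (by norm_num))
end

section
/- Let μ be a Borel probability measure on a compact metric space X and define the probability space Ω = X^ℕ with P = μ^ℕ. Let (a_{n,k})_{n,k ∈ ℕ} be non-negative real numbers such that ∑_k a_{n,k} = 1 for every n and ∑_{n,k} a_{n,k}² < ∞. For ω = (ω_k) ∈ Ω let μ_n^ω = ∑_k a_{n,k} δ_{ω_k}. Then for P-almost every ω, μ_n^ω → μ in the weak-* topology as n → ∞. -/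
open MeasureTheory ProbabilityTheory Filter Topology

/-! For a fixed continuous `f`, the centred weighted sums
`T_n ω = ∑_k a_{n,k} (f ω_k - ∫ f dμ)` satisfy `E[T_n²] ≤ (2‖f‖)² ∑_k a_{n,k}²`, because the cross
terms vanish by pairwise independence. Hence `∑_n E[T_n²] < ∞`, so `∑_n T_n² < ∞` and `T_n → 0`
almost surely. A countable dense set of test functions costs only countably many null sets, and
since `f ↦ ∫ f dν` is 1-Lipschitz on `C(X, ℝ)` for every probability measure `ν`, convergence
on the dense set extends to all of `C(X, ℝ)`. -/

lemma summable_of_tsum_ne_zero {ι α : Type*} [AddCommMonoid α] [TopologicalSpace α] {a : ι → α}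
    (h : ∑' k, a k ≠ 0) : Summable a :=
  by_contra fun h' => h (tsum_eq_zero_of_not_summable h')

lemma summable_mul_of_norm_le {ι : Type*} {a y : ι → ℝ} {D : ℝ} (ha0 : ∀ k, 0 ≤ a k)
    (ha : Summable a) (hy : ∀ k, ‖y k‖ ≤ D) : Summable fun k => a k * y k :=
  (ha.mul_right D).of_norm_bounded fun k =>
    norm_mul_le_of_le (Real.norm_of_nonneg (ha0 k)).le (hy k)

lemma norm_sq_le_sq_of_norm_le {y D : ℝ} (h : ‖y‖ ≤ D) : ‖y ^ 2‖ ≤ D ^ 2 :=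
  (norm_pow y 2).trans_le (pow_le_pow_left₀ (norm_nonneg y) h 2)

lemma norm_tsum_mul_le {ι : Type*} {a y : ι → ℝ} {D : ℝ} (ha0 : ∀ k, 0 ≤ a k)
    (ha : Summable a) (hy : ∀ k, ‖y k‖ ≤ D) : ‖∑' k, a k * y k‖ ≤ (∑' k, a k) * D :=
  tsum_of_norm_bounded (f := fun k => a k * y k) (ha.hasSum.mul_right D) fun k =>
    norm_mul_le_of_le (Real.norm_of_nonneg (ha0 k)).le (hy k)

section WeightedDirac

variable {X ι : Type*} [MeasurableSpace X] {a : ι → ℝ}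

lemma isProbabilityMeasure_sum_smul_dirac (ha0 : ∀ k, 0 ≤ a k) (ha1 : ∑' k, a k = 1)
    (x : ι → X) :
    IsProbabilityMeasure (Measure.sum fun k => ENNReal.ofReal (a k) • Measure.dirac (x k)) := by
  constructor
  simp only [Measure.sum_apply _ MeasurableSet.univ, Measure.smul_apply, measure_univ,
    smul_eq_mul, mul_one]
  rw [← ENNReal.ofReal_tsum_of_nonneg ha0 (summable_of_tsum_ne_zero (ha1.symm ▸ one_ne_zero)), ha1,
    ENNReal.ofReal_one]

lemma integral_sum_smul_dirac [MeasurableSingletonClass X] {E : Type*} [NormedAddCommGroup E]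
    [NormedSpace ℝ E] [CompleteSpace E] (ha0 : ∀ k, 0 ≤ a k) (x : ι → X) {f : X → E}
    (hf : Integrable f (Measure.sum fun k => ENNReal.ofReal (a k) • Measure.dirac (x k))) :
    ∫ y, f y ∂(Measure.sum fun k => ENNReal.ofReal (a k) • Measure.dirac (x k)) =
      ∑' k, a k • f (x k) := by
  simp only [integral_sum_measure hf, integral_smul_measure, MeasureTheory.integral_dirac,
    ENNReal.toReal_ofReal (ha0 _)]

end WeightedDirac

lemma lipschitzWith_one_integral_continuousMap {X : Type*} [TopologicalSpace X] [CompactSpace X]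
    [MeasurableSpace X] [OpensMeasurableSpace X] (ν : Measure X) [IsProbabilityMeasure ν] :
    LipschitzWith 1 fun f : C(X, ℝ) => ∫ x, f x ∂ν := by
  refine LipschitzWith.of_dist_le_mul fun f g => ?_
  have hint : ∀ h : C(X, ℝ), Integrable h ν := fun h =>
    (BoundedContinuousFunction.mkOfCompact h).integrable ν
  rw [NNReal.coe_one, one_mul, dist_eq_norm, dist_eq_norm, ← integral_sub (hint f) (hint g)]
  exact ((BoundedContinuousFunction.mkOfCompact (f - g)).norm_integral_le_norm ν).trans_eq
    (BoundedContinuousFunction.norm_mkOfCompact _)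

section WeightedSums

variable {Ω : Type*} [MeasurableSpace Ω] {P : Measure Ω}

lemma integral_sq_sum_mul_of_pairwise_indepFun {ι : Type*} {Y : ι → Ω → ℝ}
    (hY : ∀ k, MemLp (Y k) 2 P) (hindep : Pairwise fun j k => IndepFun (Y j) (Y k) P)
    (hcent : ∀ k, ∫ ω, Y k ω ∂P = 0) (a : ι → ℝ) (s : Finset ι) :
    ∫ ω, (∑ k ∈ s, a k * Y k ω) ^ 2 ∂P = ∑ k ∈ s, a k ^ 2 * ∫ ω, Y k ω ^ 2 ∂P := by
  classical
  have hcov : ∀ j k, ∫ ω, Y j ω * Y k ω ∂P = if j = k then ∫ ω, Y k ω ^ 2 ∂P else 0 := by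
    intro j k
    split_ifs with hjk
    · simp only [hjk, sq]
    · exact ((hindep hjk).integral_mul_eq_mul_integral (hY j).1 (hY k).1).trans
        (by rw [hcent j, zero_mul])
  calc ∫ ω, (∑ k ∈ s, a k * Y k ω) ^ 2 ∂P
      = ∫ ω, ∑ j ∈ s, ∑ k ∈ s, a j * a k * (Y j ω * Y k ω) ∂P := by
        congr with ω
        rw [sq, Finset.sum_mul_sum]
        exact Finset.sum_congr rfl fun j _ => Finset.sum_congr rfl fun k _ => by ring
    _ = ∑ j ∈ s, ∑ k ∈ s, a j * a k * ∫ ω, Y j ω * Y k ω ∂P := by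
        have hint : ∀ j k, Integrable (fun ω => Y j ω * Y k ω) P := fun j k =>
          (hY j).integrable_mul (hY k)
        rw [integral_finsetSum _ fun j _ => integrable_finsetSum _ fun k _ =>
          (hint j k).const_mul _]
        refine Finset.sum_congr rfl fun j _ => ?_
        rw [integral_finsetSum _ fun k _ => (hint j k).const_mul _]
        exact Finset.sum_congr rfl fun k _ => integral_const_mul _ _
    _ = ∑ k ∈ s, a k ^ 2 * ∫ ω, Y k ω ^ 2 ∂P := by
        refine Finset.sum_congr rfl fun j hj => ?_
        simp only [hcov, mul_ite, mul_zero, Finset.sum_ite_eq, if_pos hj]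
        ring

lemma integral_sq_tsum_mul_le [IsProbabilityMeasure P] {Y : ℕ → Ω → ℝ} {C : ℝ}
    (hmeas : ∀ k, Measurable (Y k)) (hbdd : ∀ k ω, ‖Y k ω‖ ≤ C)
    (hindep : Pairwise fun j k => IndepFun (Y j) (Y k) P) (hcent : ∀ k, ∫ ω, Y k ω ∂P = 0)
    {a : ℕ → ℝ} (ha0 : ∀ k, 0 ≤ a k) (ha : Summable a) (ha2 : Summable fun k => a k ^ 2) :
    ∫ ω, (∑' k, a k * Y k ω) ^ 2 ∂P ≤ C ^ 2 * ∑' k, a k ^ 2 := by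
  have hpartial : ∀ K ω, ‖∑ k ∈ Finset.range K, a k * Y k ω‖ ≤ (∑' k, a k) * C := fun K ω =>
    calc ‖∑ k ∈ Finset.range K, a k * Y k ω‖
        ≤ ∑ k ∈ Finset.range K, a k * C := (norm_sum_le _ _).trans <| Finset.sum_le_sum
          fun k _ => norm_mul_le_of_le (Real.norm_of_nonneg (ha0 k)).le (hbdd k ω)
      _ = (∑ k ∈ Finset.range K, a k) * C := (Finset.sum_mul _ _ _).symm
      _ ≤ (∑' k, a k) * C := mul_le_mul_of_nonneg_right (ha.sum_le_tsum _ fun k _ => ha0 k)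
          ((norm_nonneg _).trans (hbdd 0 ω))
  have hlim : Tendsto (fun K => ∫ ω, (∑ k ∈ Finset.range K, a k * Y k ω) ^ 2 ∂P) atTop
      (𝓝 (∫ ω, (∑' k, a k * Y k ω) ^ 2 ∂P)) :=
    tendsto_integral_of_dominated_convergence (fun _ => ((∑' k, a k) * C) ^ 2)
      (fun K => ((Finset.measurable_sum _ fun k _ => (hmeas k).const_mul _).pow_const 2)
        |>.aestronglyMeasurable) (integrable_const _)
      (fun K => ae_of_all _ fun ω => norm_sq_le_sq_of_norm_le (hpartial K ω))
      (ae_of_all _ fun ω => ((summable_mul_of_norm_le ha0 ha (hbdd · ω)).hasSum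
        |>.tendsto_sum_nat).pow 2)
  have hY2 : ∀ k, ∫ ω, Y k ω ^ 2 ∂P ≤ C ^ 2 := fun k => by
    simpa using (le_abs_self _).trans (norm_integral_le_of_norm_le_const
      (ae_of_all P fun ω => norm_sq_le_sq_of_norm_le (hbdd k ω)))
  refine le_of_tendsto' hlim fun K => ?_
  rw [integral_sq_sum_mul_of_pairwise_indepFun (fun k => MemLp.of_bound
    (hmeas k).aestronglyMeasurable C (ae_of_all _ (hbdd k))) hindep hcent]
  calc ∑ k ∈ Finset.range K, a k ^ 2 * ∫ ω, Y k ω ^ 2 ∂P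
      ≤ ∑ k ∈ Finset.range K, a k ^ 2 * C ^ 2 :=
        Finset.sum_le_sum fun k _ => mul_le_mul_of_nonneg_left (hY2 k) (sq_nonneg _)
    _ ≤ C ^ 2 * ∑' k, a k ^ 2 := by
        rw [← Finset.sum_mul, mul_comm]
        exact mul_le_mul_of_nonneg_left (ha2.sum_le_tsum _ fun k _ => sq_nonneg _) (sq_nonneg _)

lemma ae_tendsto_zero_of_summable_integral_sq {f : ℕ → Ω → ℝ}
    (hint : ∀ n, Integrable (fun ω => f n ω ^ 2) P)
    (hsum : Summable fun n => ∫ ω, f n ω ^ 2 ∂P) :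
    ∀ᵐ ω ∂P, Tendsto (fun n => f n ω) atTop (𝓝 0) := by
  have hmeas : ∀ n, AEMeasurable (fun ω => ENNReal.ofReal (f n ω ^ 2)) P := fun n =>
    (hint n).aemeasurable.ennreal_ofReal
  have hlint : ∫⁻ ω, ∑' n, ENNReal.ofReal (f n ω ^ 2) ∂P ≠ ⊤ := by
    have hterm : ∀ n, ∫⁻ ω, ENNReal.ofReal (f n ω ^ 2) ∂P = ENNReal.ofReal (∫ ω, f n ω ^ 2 ∂P) :=
      fun n => (ofReal_integral_eq_lintegral_ofReal (hint n)
        (ae_of_all _ fun ω => sq_nonneg _)).symm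
    rw [lintegral_tsum hmeas, funext hterm, ← ENNReal.ofReal_tsum_of_nonneg
      (fun n => integral_nonneg fun ω => sq_nonneg _) hsum]
    exact ENNReal.ofReal_ne_top
  filter_upwards [ae_lt_top' (AEMeasurable.tsum hmeas) hlint] with ω hω
  have hsq : Tendsto (fun n => f n ω ^ 2) atTop (𝓝 0) := by
    simpa only [ENNReal.toReal_ofReal (sq_nonneg _)] using
      (ENNReal.summable_toReal hω.ne).tendsto_atTop_zero
  have habs : Tendsto (fun n => |f n ω|) atTop (𝓝 0) := by
    simpa only [Real.sqrt_sq_eq_abs, Real.sqrt_zero] using hsq.sqrt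
  exact (tendsto_zero_iff_abs_tendsto_zero _).2 habs

theorem ae_tendsto_tsum_mul_of_pairwise_indepFun [IsProbabilityMeasure P] {Y : ℕ → Ω → ℝ}
    {C m : ℝ} (hmeas : ∀ k, Measurable (Y k)) (hbdd : ∀ k ω, ‖Y k ω‖ ≤ C)
    (hindep : Pairwise fun j k => IndepFun (Y j) (Y k) P) (hmean : ∀ k, ∫ ω, Y k ω ∂P = m)
    {a : ℕ → ℕ → ℝ} (ha0 : ∀ n k, 0 ≤ a n k) (ha1 : ∀ n, ∑' k, a n k = 1)
    (ha2 : Summable fun p : ℕ × ℕ => a p.1 p.2 ^ 2) :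
    ∀ᵐ ω ∂P, Tendsto (fun n => ∑' k, a n k * Y k ω) atTop (𝓝 m) := by
  have hsum : ∀ n, Summable (a n) := fun n =>
    summable_of_tsum_ne_zero ((ha1 n).symm ▸ one_ne_zero)
  set Z : ℕ → Ω → ℝ := fun k ω => Y k ω - m
  have hZmeas : ∀ k, Measurable (Z k) := fun k => (hmeas k).sub_const m
  have hZbdd : ∀ k ω, ‖Z k ω‖ ≤ C + ‖m‖ := fun k ω =>
    (norm_sub_le _ _).trans (add_le_add_left (hbdd k ω) _)
  have hZcent : ∀ k, ∫ ω, Z k ω ∂P = 0 := fun k => by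
    rw [integral_sub (Integrable.of_bound (hmeas k).aestronglyMeasurable C
      (ae_of_all _ (hbdd k))) (integrable_const m), hmean, integral_const, probReal_univ,
      one_smul, sub_self]
  set T : ℕ → Ω → ℝ := fun n ω => ∑' k, a n k * Z k ω
  have hTbdd : ∀ n ω, ‖T n ω ^ 2‖ ≤ (C + ‖m‖) ^ 2 := fun n ω => by
    have hT := norm_tsum_mul_le (ha0 n) (hsum n) (hZbdd · ω)
    rw [ha1 n, one_mul] at hT
    exact norm_sq_le_sq_of_norm_le hT
  have hT : ∀ᵐ ω ∂P, Tendsto (fun n => T n ω) atTop (𝓝 0) := by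
    refine ae_tendsto_zero_of_summable_integral_sq (fun n => Integrable.of_bound
      ((Measurable.tsum fun k => (hZmeas k).const_mul _).pow_const 2).aestronglyMeasurable _
      (ae_of_all _ (hTbdd n))) ?_
    refine Summable.of_nonneg_of_le (fun n => integral_nonneg fun ω => sq_nonneg _)
      (fun n => integral_sq_tsum_mul_le hZmeas hZbdd
        (fun j k hjk => (hindep hjk).comp (measurable_sub_const m) (measurable_sub_const m))
        hZcent (ha0 n) (hsum n) (ha2.prod_factor n)) (ha2.prod.mul_left _)
  filter_upwards [hT] with ω hω
  have hsplit : ∀ n, ∑' k, a n k * Y k ω = m + T n ω := fun n => by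
    have hY : (fun k => a n k * Y k ω) = fun k => a n k * m + a n k * Z k ω :=
      funext fun k => by ring
    rw [hY, ((hsum n).mul_right m).tsum_add
      (summable_mul_of_norm_le (ha0 n) (hsum n) (hZbdd · ω)), tsum_mul_right, ha1 n, one_mul]
  simpa only [hsplit, add_zero] using hω.const_add m

end WeightedSums

/-- **Lemma.** Let `μ` be a Borel probability measure on a compact metric space `X` and
`P = μ^ℕ` on `Ω = X^ℕ` (characterized as the unique probability measure making the
coordinates i.i.d. with law `μ`). Let `(a_{n,k})` be non-negative with `∑_k a_{n,k} = 1`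
for every `n` and `∑_{n,k} a_{n,k}² < ∞`. Then for `P`-a.e. `ω`, the measures
`μ_n^ω = ∑_k a_{n,k} δ_{ω_k}` converge weak-* to `μ`. -/
theorem random_discrete_measures_converge
    {X : Type*} [MetricSpace X] [CompactSpace X] [MeasurableSpace X] [BorelSpace X]
    (μ : Measure X) [IsProbabilityMeasure μ]
    (P : Measure (ℕ → X)) [IsProbabilityMeasure P]
    (hiid : ProbabilityTheory.iIndepFun
      (fun k (ω : ℕ → X) => ω k) P)
    (hlaw : ∀ k, P.map (fun ω => ω k) = μ)
    (a : ℕ → ℕ → ℝ) (ha0 : ∀ n k, 0 ≤ a n k) (ha1 : ∀ n, ∑' k, a n k = 1)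
    (ha2 : Summable fun p : ℕ × ℕ => a p.1 p.2 ^ 2) :
    ∀ᵐ ω ∂P, ∀ f : C(X, ℝ),
      Filter.Tendsto
        (fun n => ∫ x, f x ∂(Measure.sum fun k =>
          ENNReal.ofReal (a n k) • Measure.dirac (ω k)))
        Filter.atTop (nhds (∫ x, f x ∂μ)) := by
  have hprob : ∀ n (ω : ℕ → X), IsProbabilityMeasure
      (Measure.sum fun k => ENNReal.ofReal (a n k) • Measure.dirac (ω k)) := fun n ω =>
    isProbabilityMeasure_sum_smul_dirac (ha0 n) (ha1 n) ω
  have hint : ∀ n (ω : ℕ → X) (f : C(X, ℝ)),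
      Integrable f (Measure.sum fun k => ENNReal.ofReal (a n k) • Measure.dirac (ω k)) :=
    fun n ω f => have := hprob n ω; (BoundedContinuousFunction.mkOfCompact f).integrable _
  have hmean : ∀ (f : C(X, ℝ)) k, ∫ ω, f (ω k) ∂P = ∫ x, f x ∂μ := fun f k => by
    rw [← hlaw k, integral_map (measurable_pi_apply k).aemeasurable
      f.continuous.aestronglyMeasurable]
  obtain ⟨D, hDc, hDd⟩ := TopologicalSpace.exists_countable_dense C(X, ℝ)
  have hD : ∀ᵐ ω ∂P, ∀ f ∈ D, Tendsto (fun n => ∫ x, f x ∂(Measure.sum fun k =>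
      ENNReal.ofReal (a n k) • Measure.dirac (ω k))) atTop (𝓝 (∫ x, f x ∂μ)) := by
    refine (ae_ball_iff hDc).2 fun f _ => ?_
    filter_upwards [ae_tendsto_tsum_mul_of_pairwise_indepFun
      (fun k => f.continuous.measurable.comp (measurable_pi_apply k))
      (fun k ω => f.norm_coe_le_norm (ω k))
      (fun j k hjk => (hiid.indepFun hjk).comp f.continuous.measurable f.continuous.measurable)
      (hmean f) ha0 ha1 ha2] with ω hω
    simpa only [integral_sum_smul_dirac (ha0 _) ω (hint _ ω f), smul_eq_mul,
      Function.comp_apply] using hω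
  filter_upwards [hD] with ω hω f
  have hequi : Equicontinuous fun n (g : C(X, ℝ)) => ∫ x, g x ∂(Measure.sum fun k =>
      ENNReal.ofReal (a n k) • Measure.dirac (ω k)) :=
    (LipschitzWith.uniformEquicontinuous _ 1 fun n =>
      have := hprob n ω; lipschitzWith_one_integral_continuousMap _).equicontinuous
  exact (hequi.isClosed_setOfPred_tendsto (lipschitzWith_one_integral_continuousMap μ).continuous
    ).closure_subset_iff.2 hω (hDd f)
end

section
/- Let (ξ_n) be a sequence of independent non-negative random variables. Then almost surely liminf_{n→∞} ξ_n ≤ liminf_{n→∞} E[ξ_n]. -/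
/-!
By Fatou, `E[liminf ξ] ≤ liminf E[ξ]`. The event `{liminf ξ ≤ liminf E[ξ]}` lies in the tail
σ-algebra, so by Kolmogorov's 0-1 law its probability is 0 or 1; it cannot be 0, because a random
variable is at most its mean with positive probability.
-/

open MeasureTheory ENNReal Filter

theorem measurable_liminf_limsup_comap {Ω β : Type*} [mβ : MeasurableSpace β]
    [ConditionallyCompleteLinearOrder β] [TopologicalSpace β] [OrderTopology β]
    [SecondCountableTopology β] [BorelSpace β] (ξ : ℕ → Ω → β) :
    Measurable[limsup (fun n => mβ.comap (ξ n)) atTop]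
      (fun ω => liminf (fun n => ξ n ω) atTop) := by
  intro s hs
  rw [limsup_eq_iInf_iSup_of_nat, MeasurableSpace.measurableSet_iInf]
  intro n
  have hshift : (fun ω => liminf (fun k => ξ k ω) atTop) =
      fun ω => liminf (fun k => ξ (k + n) ω) atTop :=
    funext fun ω => (liminf_nat_add (fun k => ξ k ω) n).symm
  rw [hshift]
  refine Measurable.liminf (fun k => ?_) hs
  exact (comap_measurable (ξ (k + n))).mono
    (le_iSup₂ (f := fun i (_ : i ≥ n) => mβ.comap (ξ i)) (k + n) (Nat.le_add_left n k)) le_rfl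

theorem ae_le_of_lintegral_le_of_measure_zero_or_one {Ω : Type*} [MeasurableSpace Ω]
    {P : Measure Ω} [IsProbabilityMeasure P] {f : Ω → ℝ≥0∞} (hf : Measurable f) {c : ℝ≥0∞}
    (hint : ∫⁻ ω, f ω ∂P ≤ c) (h01 : P {ω | f ω ≤ c} = 0 ∨ P {ω | f ω ≤ c} = 1) :
    ∀ᵐ ω ∂P, f ω ≤ c := by
  have hpos : 0 < P {ω | f ω ≤ c} :=
    (measure_le_lintegral_pos hf.aemeasurable).trans_le
      (measure_mono fun ω hω => le_trans hω hint)
  rw [← mem_ae_iff_prob_eq_one (measurableSet_le hf measurable_const)] at h01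
  exact h01.resolve_left hpos.ne'

theorem liminf_le_liminf_expectation_general
    {Ω : Type*} [MeasurableSpace Ω] (P : Measure Ω) [IsProbabilityMeasure P]
    (ξ : ℕ → Ω → ℝ≥0∞) (hmeas : ∀ n, Measurable (ξ n))
    (hindep : ProbabilityTheory.iIndepFun ξ P) :
    ∀ᵐ ω ∂P, Filter.liminf (fun n => ξ n ω) Filter.atTop ≤
      Filter.liminf (fun n => ∫⁻ ω', ξ n ω' ∂P) Filter.atTop := by
  set L := liminf (fun n => ∫⁻ ω', ξ n ω' ∂P) atTop
  have hfatou : ∫⁻ ω, liminf (fun n => ξ n ω) atTop ∂P ≤ L := lintegral_liminf_le hmeas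
  have hzero_one := ProbabilityTheory.measure_zero_or_one_of_measurableSet_limsup_atTop
    (fun n => (hmeas n).comap_le) hindep
    (measurable_liminf_limsup_comap ξ (measurableSet_Iic (a := L)))
  exact ae_le_of_lintegral_le_of_measure_zero_or_one (Measurable.liminf hmeas) hfatou hzero_one

/-- **Lemma.** Let `(ξ_n)` be a sequence of independent non-negative random variables
(with finite expectations). Then almost surely
`liminf_n ξ_n ≤ liminf_n E[ξ_n]`, where `liminf` is taken in `[0,∞]`. -/
theorem liminf_le_liminf_expectation
    {Ω : Type*} [MeasurableSpace Ω] (P : Measure Ω) [IsProbabilityMeasure P]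
    (ξ : ℕ → Ω → ℝ≥0∞) (hmeas : ∀ n, Measurable (ξ n))
    (hindep : ProbabilityTheory.iIndepFun ξ P)
    (hfin : ∀ n, ∫⁻ ω, ξ n ω ∂P < ∞) :
    ∀ᵐ ω ∂P, Filter.liminf (fun n => ξ n ω) Filter.atTop ≤
      Filter.liminf (fun n => ∫⁻ ω', ξ n ω' ∂P) Filter.atTop :=
  liminf_le_liminf_expectation_general P ξ hmeas hindep
end

section
/- There is an absolute constant C such that for all r₁, r₂ > 0, all ρ ∈ [0, r₁] and all a > 0, the Lebesgue measure of A ∩ B(a) is at most C · min(a⁴, r₁²a², r₁²r₂²), where A = [−2r₁, 2r₁] × [−2r₁, 2r₁] × [−2r₂², 2r₂²] and B(a) = {(x,y,z) ∈ ℝ³ : |x| ≤ a, |y| ≤ a, |z − 2ρy| ≤ a²}. -/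
open MeasureTheory ENNReal

/-!
By Cavalieri, the sheared box `{|x| ≤ m₁, |y| ≤ m₂, |z - c y| ≤ h}` has volume `8 m₁ m₂ h`
whatever the shear `c`. The intersection `A ∩ B(a)` lies in three such boxes,
`(m₁, m₂, h) = (a, a, a²)` and `(2r₁, 2r₁, a²)` with shear `c = 2ρ`, and `A` itself with `c = 0`,
of volumes `8a⁴`, `32 r₁² a²` and `64 r₁² r₂²`.
-/

theorem volume_setOf_mem_and_abs_sub_le {s : Set ℝ} (hs : MeasurableSet s) {f : ℝ → ℝ}
    (hf : Measurable f) (h : ℝ) :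
    volume {q : ℝ × ℝ | q.1 ∈ s ∧ |q.2 - f q.1| ≤ h} = volume s * ENNReal.ofReal (2 * h) := by
  have hmeas : MeasurableSet {q : ℝ × ℝ | q.1 ∈ s ∧ |q.2 - f q.1| ≤ h} :=
    (measurable_fst hs).inter
      (measurableSet_le (measurable_snd.sub (hf.comp measurable_fst)).abs measurable_const)
  have hfiber : ∀ x, volume (Prod.mk x ⁻¹' {q : ℝ × ℝ | q.1 ∈ s ∧ |q.2 - f q.1| ≤ h}) =
      s.indicator (fun _ => ENNReal.ofReal (2 * h)) x := by
    intro x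
    by_cases hx : x ∈ s
    · rw [Set.indicator_of_mem hx, ← Real.volume_closedBall (f x) h]
      congr 1
      ext y
      simp [hx, Real.dist_eq]
    · simp [hx]
  rw [Measure.volume_eq_prod, Measure.prod_apply hmeas]
  simp_rw [hfiber]
  rw [lintegral_indicator_const hs, mul_comm]

theorem volume_sheared_box (c : ℝ) {m₁ m₂ : ℝ} (hm₁ : 0 ≤ m₁) (hm₂ : 0 ≤ m₂) (h : ℝ) :
    volume {p : ℝ × ℝ × ℝ | |p.1| ≤ m₁ ∧ |p.2.1| ≤ m₂ ∧ |p.2.2 - c * p.2.1| ≤ h} =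
      ENNReal.ofReal (8 * m₁ * m₂ * h) := by
  have hprod : {p : ℝ × ℝ × ℝ | |p.1| ≤ m₁ ∧ |p.2.1| ≤ m₂ ∧ |p.2.2 - c * p.2.1| ≤ h} =
      Set.Icc (-m₁) m₁ ×ˢ {q : ℝ × ℝ | q.1 ∈ Set.Icc (-m₂) m₂ ∧ |q.2 - c * q.1| ≤ h} := by
    ext p
    simp [abs_le]
  rw [hprod, Measure.volume_eq_prod, Measure.prod_prod,
    volume_setOf_mem_and_abs_sub_le measurableSet_Icc (measurable_const_mul c),
    Real.volume_Icc, Real.volume_Icc, ← ENNReal.ofReal_mul (by linarith),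
    ← ENNReal.ofReal_mul (by linarith)]
  ring_nf

/-- **Sublemma.** There is an absolute constant `C` such that for all `r₁, r₂ > 0`,
`ρ ∈ [0, r₁]` and `a > 0`, the Lebesgue measure of `A ∩ B(a)` is at most
`C · min(a⁴, r₁²a², r₁²r₂²)`, where `A = [−2r₁,2r₁] × [−2r₁,2r₁] × [−2r₂²,2r₂²]` and
`B(a) = {(x,y,z) : |x| ≤ a, |y| ≤ a, |z − 2ρy| ≤ a²}`. -/
theorem box_slab_intersection_volume_bound :
    ∃ C : ℝ, 0 < C ∧ ∀ r₁ r₂ ρ a : ℝ, 0 < r₁ → 0 < r₂ → 0 ≤ ρ → ρ ≤ r₁ → 0 < a →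
      volume {p : ℝ × ℝ × ℝ |
          (|p.1| ≤ 2 * r₁ ∧ |p.2.1| ≤ 2 * r₁ ∧ |p.2.2| ≤ 2 * r₂ ^ 2) ∧
          (|p.1| ≤ a ∧ |p.2.1| ≤ a ∧ |p.2.2 - 2 * ρ * p.2.1| ≤ a ^ 2)}
        ≤ ENNReal.ofReal (C * min (a ^ 4) (min (r₁ ^ 2 * a ^ 2) (r₁ ^ 2 * r₂ ^ 2))) := by
  refine ⟨64, by norm_num, fun r₁ r₂ ρ a hr₁ _ _ _ ha => ?_⟩
  have hr : 0 ≤ 2 * r₁ := by positivity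
  have vol_small := volume_sheared_box (2 * ρ) ha.le ha.le (a ^ 2)
  have vol_thin := volume_sheared_box (2 * ρ) hr hr (a ^ 2)
  have vol_A := volume_sheared_box 0 hr hr (2 * r₂ ^ 2)
  simp only [mul_min_of_nonneg _ _ (by norm_num : (0 : ℝ) ≤ 64), ENNReal.ofReal_min]
  refine le_min ?_ (le_min ?_ ?_)
  · refine (measure_mono fun p hp => hp.2).trans (vol_small.le.trans ?_)
    exact ENNReal.ofReal_le_ofReal (by nlinarith [pow_pos ha 4])
  · refine (measure_mono ?_).trans (vol_thin.le.trans ?_)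
    · exact fun p hp => ⟨hp.1.1, hp.1.2.1, hp.2.2.2⟩
    · exact ENNReal.ofReal_le_ofReal (by nlinarith [sq_nonneg (r₁ * a)])
  · refine (measure_mono ?_).trans (vol_A.le.trans ?_)
    · exact fun p hp => by simpa using hp.1
    · exact ENNReal.ofReal_le_ofReal (by nlinarith)
end

section
/- There is an absolute constant C such that for all r₁, r₂ > 0, all ρ ∈ (0, r₁] and all a > 0, the Lebesgue measure of A ∩ B(a) is at most C · min(a⁴, r₂²a³/ρ, r₁r₂²a, r₁²r₂²), where A = [−2r₁, 2r₁] × [−2r₁, 2r₁] × [−2r₂², 2r₂²] and B(a) = {(x,y,z) ∈ ℝ³ : |x| ≤ a, |y| ≤ a, |z − 2ρy| ≤ a²}. -/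
/-!
Each term of the minimum bounds the volume of a simple set containing `A ∩ B(a)`.
For `a⁴`: with `|x| ≤ a`, the slab `{|y| ≤ a, |z - 2ρy| ≤ a²}` has `z`-sections of length `2a²`.
For `r₂²a³/ρ`: with `|x| ≤ a`, the set `{|z| ≤ 2r₂², |z - 2ρy| ≤ a²}` has `y`-sections of
length `a²/ρ`. The last two terms are volumes of boxes. Hence `C = 64` works.
-/

open MeasureTheory ENNReal

open Set Metric

namespace MeasureTheory.Measure

variable {α β : Type*} [MeasurableSpace α] [MeasurableSpace β] {μ : Measure α} {ν : Measure β}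
  {s : Set (α × β)} {c : ℝ≥0∞}

theorem prod_apply_le_of_subset_prod_univ [SFinite ν] {t : Set α} (hs : MeasurableSet s)
    (hst : s ⊆ t ×ˢ univ) (hfib : ∀ x, ν (Prod.mk x ⁻¹' s) ≤ c) : μ.prod ν s ≤ c * μ t := by
  rw [prod_apply hs]
  refine (lintegral_mono fun x => ?_).trans (lintegral_indicator_const_le t c)
  by_cases hx : x ∈ t
  · simpa [hx] using hfib x
  · have : Prod.mk x ⁻¹' s = ∅ := eq_empty_of_forall_notMem fun y hy => hx (hst hy).1
    simp [hx, this]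

theorem prod_apply_le_of_subset_univ_prod [SFinite μ] [SFinite ν] {t : Set β}
    (hs : MeasurableSet s) (hst : s ⊆ univ ×ˢ t) (hfib : ∀ y, μ ((·, y) ⁻¹' s) ≤ c) :
    μ.prod ν s ≤ c * ν t := by
  rw [← prod_swap, map_apply measurable_swap hs]
  exact prod_apply_le_of_subset_prod_univ (measurable_swap hs)
    (fun _ hp => ⟨(hst hp).2, trivial⟩) hfib

end MeasureTheory.Measure

theorem volume_le_of_subset_prod {α β : Type*} [MeasureSpace α] [MeasureSpace β]
    [SFinite (volume : Measure β)] {s : Set (α × β)} {t : Set α} {u : Set β}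
    (h : s ⊆ t ×ˢ u) : volume s ≤ volume t * volume u :=
  (measure_mono h).trans_eq (Measure.prod_prod t u)

theorem measurableSet_abs_le_and_abs_sub_mul_le {f : ℝ × ℝ → ℝ} (hf : Measurable f)
    (k h b : ℝ) : MeasurableSet {q : ℝ × ℝ | |f q| ≤ b ∧ |q.2 - k * q.1| ≤ h} := by
  rw [ofPred_and]
  exact (measurableSet_le (by fun_prop) measurable_const).inter
    (measurableSet_le (by fun_prop) measurable_const)

theorem volume_abs_fst_le_and_abs_sub_mul_le (k b h : ℝ) :
    volume {q : ℝ × ℝ | |q.1| ≤ b ∧ |q.2 - k * q.1| ≤ h} ≤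
      ENNReal.ofReal (2 * h) * ENNReal.ofReal (2 * b) := by
  rw [← Real.volume_closedBall 0 b]
  refine Measure.prod_apply_le_of_subset_prod_univ
    (measurableSet_abs_le_and_abs_sub_mul_le measurable_fst k h b)
    (fun q hq => ⟨mem_closedBall_zero_iff.mpr hq.1, trivial⟩) fun y => ?_
  rw [← Real.volume_closedBall (k * y) h]
  exact measure_mono fun z hz => hz.2

theorem volume_abs_snd_le_and_abs_sub_mul_le {k : ℝ} (hk : 0 < k) (c h : ℝ) :
    volume {q : ℝ × ℝ | |q.2| ≤ c ∧ |q.2 - k * q.1| ≤ h} ≤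
      ENNReal.ofReal (2 * (h / k)) * ENNReal.ofReal (2 * c) := by
  rw [← Real.volume_closedBall 0 c]
  refine Measure.prod_apply_le_of_subset_univ_prod
    (measurableSet_abs_le_and_abs_sub_mul_le measurable_snd k h c)
    (fun q hq => ⟨trivial, mem_closedBall_zero_iff.mpr hq.1⟩) fun z => ?_
  rw [← Real.volume_closedBall (z / k) (h / k)]
  refine measure_mono fun y hy => ?_
  have hdist : dist y (z / k) = |z - k * y| / k := by
    rw [Real.dist_eq, eq_div_iff hk.ne', ← abs_of_pos hk, ← abs_mul, abs_of_pos hk, ← abs_neg]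
    congr 1
    field_simp
    ring
  rw [mem_closedBall, hdist]
  exact div_le_div_of_nonneg_right hy.2 hk.le

/-- `A ∩ B(a)`. -/
def boxSlab (r₁ r₂ ρ a : ℝ) : Set (ℝ × ℝ × ℝ) :=
  {p | (|p.1| ≤ 2 * r₁ ∧ |p.2.1| ≤ 2 * r₁ ∧ |p.2.2| ≤ 2 * r₂ ^ 2) ∧
    (|p.1| ≤ a ∧ |p.2.1| ≤ a ∧ |p.2.2 - 2 * ρ * p.2.1| ≤ a ^ 2)}

section boxSlab

variable {r₁ r₂ ρ a : ℝ}

theorem volume_boxSlab_le_a_pow_four (ha : 0 ≤ a) :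
    volume (boxSlab r₁ r₂ ρ a) ≤ ENNReal.ofReal (8 * a ^ 4) :=
  calc volume (boxSlab r₁ r₂ ρ a)
      ≤ volume (closedBall (0 : ℝ) a) *
          volume {q : ℝ × ℝ | |q.1| ≤ a ∧ |q.2 - 2 * ρ * q.1| ≤ a ^ 2} :=
        volume_le_of_subset_prod fun _ hp => ⟨mem_closedBall_zero_iff.mpr hp.2.1, hp.2.2⟩
    _ ≤ ENNReal.ofReal (2 * a) * (ENNReal.ofReal (2 * a ^ 2) * ENNReal.ofReal (2 * a)) := by
        rw [Real.volume_closedBall]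
        gcongr
        exact volume_abs_fst_le_and_abs_sub_mul_le _ _ _
    _ = ENNReal.ofReal (8 * a ^ 4) := by
        rw [← ENNReal.ofReal_mul (by positivity), ← ENNReal.ofReal_mul (by positivity)]
        ring_nf

theorem volume_boxSlab_le_a_cube_div (hρ : 0 < ρ) (ha : 0 ≤ a) :
    volume (boxSlab r₁ r₂ ρ a) ≤ ENNReal.ofReal (8 * (r₂ ^ 2 * a ^ 3 / ρ)) :=
  calc volume (boxSlab r₁ r₂ ρ a)
      ≤ volume (closedBall (0 : ℝ) a) *
          volume {q : ℝ × ℝ | |q.2| ≤ 2 * r₂ ^ 2 ∧ |q.2 - 2 * ρ * q.1| ≤ a ^ 2} :=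
        volume_le_of_subset_prod fun _ hp =>
          ⟨mem_closedBall_zero_iff.mpr hp.2.1, hp.1.2.2, hp.2.2.2⟩
    _ ≤ ENNReal.ofReal (2 * a) *
          (ENNReal.ofReal (2 * (a ^ 2 / (2 * ρ))) * ENNReal.ofReal (2 * (2 * r₂ ^ 2))) := by
        rw [Real.volume_closedBall]
        gcongr
        exact volume_abs_snd_le_and_abs_sub_mul_le (by positivity) _ _
    _ = ENNReal.ofReal (8 * (r₂ ^ 2 * a ^ 3 / ρ)) := by
        rw [← ENNReal.ofReal_mul (by positivity), ← ENNReal.ofReal_mul (by positivity)]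
        congr 1
        field_simp
        ring

theorem volume_le_of_subset_centered_box {s : Set (ℝ × ℝ × ℝ)} {b₁ b₂ : ℝ} (hb₁ : 0 ≤ b₁)
    (hb₂ : 0 ≤ b₂) (b₃ : ℝ)
    (hs : s ⊆ closedBall (0 : ℝ) b₁ ×ˢ (closedBall (0 : ℝ) b₂ ×ˢ closedBall (0 : ℝ) b₃)) :
    volume s ≤ ENNReal.ofReal (8 * (b₁ * b₂ * b₃)) := by
  refine (measure_mono hs).trans_eq ?_
  simp only [Measure.volume_eq_prod, Measure.prod_prod, Real.volume_closedBall]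
  rw [← ENNReal.ofReal_mul (by positivity), ← ENNReal.ofReal_mul (by positivity)]
  ring_nf

theorem volume_boxSlab_le_r₁_mul_a (hr₁ : 0 ≤ r₁) (ha : 0 ≤ a) :
    volume (boxSlab r₁ r₂ ρ a) ≤ ENNReal.ofReal (32 * (r₁ * r₂ ^ 2 * a)) := by
  refine (volume_le_of_subset_centered_box ha (by positivity : 0 ≤ 2 * r₁) _
    fun _ hp => ⟨mem_closedBall_zero_iff.mpr hp.2.1, mem_closedBall_zero_iff.mpr hp.1.2.1,
      mem_closedBall_zero_iff.mpr hp.1.2.2⟩).trans_eq ?_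
  ring_nf

theorem volume_boxSlab_le_r₁_sq (hr₁ : 0 ≤ r₁) :
    volume (boxSlab r₁ r₂ ρ a) ≤ ENNReal.ofReal (64 * (r₁ ^ 2 * r₂ ^ 2)) := by
  have h2r₁ : 0 ≤ 2 * r₁ := by positivity
  refine (volume_le_of_subset_centered_box h2r₁ h2r₁ _
    fun _ hp => ⟨mem_closedBall_zero_iff.mpr hp.1.1, mem_closedBall_zero_iff.mpr hp.1.2.1,
      mem_closedBall_zero_iff.mpr hp.1.2.2⟩).trans_eq ?_
  ring_nf

end boxSlab

/-- **Sublemma.** There is an absolute constant `C` such that for all `r₁, r₂ > 0`,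
`ρ ∈ (0, r₁]` and `a > 0`, the Lebesgue measure of `A ∩ B(a)` is at most
`C · min(a⁴, r₂²a³/ρ, r₁r₂²a, r₁²r₂²)`, where
`A = [−2r₁,2r₁] × [−2r₁,2r₁] × [−2r₂²,2r₂²]` and
`B(a) = {(x,y,z) : |x| ≤ a, |y| ≤ a, |z − 2ρy| ≤ a²}`. -/
theorem box_slab_intersection_volume_bound' :
    ∃ C : ℝ, 0 < C ∧ ∀ r₁ r₂ ρ a : ℝ, 0 < r₁ → 0 < r₂ → 0 < ρ → ρ ≤ r₁ → 0 < a →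
      volume {p : ℝ × ℝ × ℝ |
          (|p.1| ≤ 2 * r₁ ∧ |p.2.1| ≤ 2 * r₁ ∧ |p.2.2| ≤ 2 * r₂ ^ 2) ∧
          (|p.1| ≤ a ∧ |p.2.1| ≤ a ∧ |p.2.2 - 2 * ρ * p.2.1| ≤ a ^ 2)}
        ≤ ENNReal.ofReal (C * min (a ^ 4)
            (min (r₂ ^ 2 * a ^ 3 / ρ) (min (r₁ * r₂ ^ 2 * a) (r₁ ^ 2 * r₂ ^ 2)))) := by
  refine ⟨64, by norm_num, fun r₁ r₂ ρ a hr₁ _ hρ _ ha => ?_⟩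
  change volume (boxSlab r₁ r₂ ρ a) ≤ _
  simp only [mul_min_of_nonneg _ _ (by norm_num : (0 : ℝ) ≤ 64), ENNReal.ofReal_min, le_min_iff]
  refine ⟨(volume_boxSlab_le_a_pow_four ha.le).trans ?_,
    (volume_boxSlab_le_a_cube_div hρ ha.le).trans ?_,
    (volume_boxSlab_le_r₁_mul_a hr₁.le ha.le).trans ?_, volume_boxSlab_le_r₁_sq hr₁.le⟩ <;>
  · gcongr
    norm_num
end
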